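/- Let X be a random variable with values in [a,b], with absolutely continuous density f : [a,b] → [0,1] whose derivative is essentially bounded, and CDF F(x) = ∫_a^x f(t) dt. Then |(1/2)[(F((3a+b)/4)+F((a+3b)/4))/2 + 1/2] + ((b-a)/8)·(f((3a+b)/4) - f((a+3b)/4))/2 - (b - E(X))/(b-a)| ≤ (1/64)(b-a)²·‖f'‖_∞. -/

import Mathlib

open MeasureTheory Set

/-!
Since `F a = 0`, `F b = 1` and `b - E = ∫ t in a..b, F t`, the left-hand side is the error of a
quadrature rule for the mean value of `F` on `[a, b]`: the average of the trapezoidal rule and the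
two-point rule at the quarter nodes `c₁ = (3a + b)/4`, `c₂ = (a + 3b)/4`, corrected by
`(b - a)/16 · (F' c₁ - F' c₂)`. Its Peano kernel `K` with respect to `F'' = f'` is, on `[a, c₁]`,
`[c₁, c₂]`, `[c₂, b]`, the quadratic `(t - c)²/2 - k` with `(c, k)` equal to `(c₁, (b - a)²/32)`,
`((a + b)/2, 0)`, `(c₂, (b - a)²/32)`: these constants make `K` vanish at `a` and `b`, and its jumps
at `c₁`, `c₂` produce the derivative correction. Integrating by parts on each piece gives
`(b - a) · error = -∫ K f'`, and since `K` has constant sign on each piece,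
`∫ |K| = 3 · (b - a)³/192 = (b - a)³/64`.
-/

noncomputable def quadKernel (c k t : ℝ) : ℝ := (t - c) ^ 2 / 2 - k

lemma continuous_quadKernel (c k : ℝ) : Continuous (quadKernel c k) := by
  unfold quadKernel; fun_prop

lemma integral_quadKernel (u v c k : ℝ) :
    ∫ t in u..v, quadKernel c k t = ((v - c) ^ 3 - (u - c) ^ 3) / 6 - k * (v - u) := by
  unfold quadKernel
  rw [intervalIntegral.integral_sub (Continuous.intervalIntegrable (by fun_prop) _ _)
      intervalIntegrable_const, intervalIntegral.integral_div,
    intervalIntegral.integral_comp_sub_right (fun x => x ^ 2), integral_pow]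
  simp only [Nat.reduceAdd, Nat.cast_ofNat, intervalIntegral.integral_const, smul_eq_mul]
  ring

lemma integral_abs_quadKernel_of_nonneg {u v c k : ℝ}
    (h : ∀ t ∈ uIcc u v, 0 ≤ quadKernel c k t) :
    ∫ t in u..v, |quadKernel c k t| = ((v - c) ^ 3 - (u - c) ^ 3) / 6 - k * (v - u) := by
  rw [← integral_quadKernel]
  exact intervalIntegral.integral_congr fun t ht => abs_of_nonneg (h t ht)

lemma integral_abs_quadKernel_of_nonpos {u v c k : ℝ}
    (h : ∀ t ∈ uIcc u v, quadKernel c k t ≤ 0) :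
    ∫ t in u..v, |quadKernel c k t| = k * (v - u) - ((v - c) ^ 3 - (u - c) ^ 3) / 6 := by
  rw [← neg_sub, ← integral_quadKernel, ← intervalIntegral.integral_neg]
  exact intervalIntegral.integral_congr fun t ht => abs_of_nonpos (h t ht)

lemma hasDerivAt_quadKernel (c k t : ℝ) : HasDerivAt (quadKernel c k) (t - c) t := by
  have h := ((((hasDerivAt_id' t).sub_const c).fun_pow 2).div_const 2).sub_const k
  exact h.congr_deriv (by ring)

lemma integral_quadKernel_mul_deriv {f f' : ℝ → ℝ} {u v : ℝ} (c k : ℝ)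
    (hf : ∀ t ∈ uIcc u v, HasDerivAt f (f' t) t) (hf' : IntervalIntegrable f' volume u v) :
    ∫ t in u..v, quadKernel c k t * f' t = quadKernel c k v * f v - quadKernel c k u * f u
      - ((∫ t in u..v, t * f t) - c * ∫ t in u..v, f t) := by
  have hfi : IntervalIntegrable f volume u v := (HasDerivAt.continuousOn hf).intervalIntegrable
  rw [intervalIntegral.integral_mul_deriv_eq_deriv_mul (fun t _ => hasDerivAt_quadKernel c k t) hf
      (Continuous.intervalIntegrable (by fun_prop) _ _) hf',
    ← intervalIntegral.integral_const_mul,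
    ← intervalIntegral.integral_sub (hfi.continuousOn_mul (by fun_prop)) (hfi.const_mul c)]
  congr 1
  exact intervalIntegral.integral_congr fun t _ => by ring

lemma abs_integral_mul_le {K g : ℝ → ℝ} {u v M : ℝ} (huv : u ≤ v)
    (hK : IntervalIntegrable K volume u v) (hg : ∀ᵐ t, t ∈ Icc u v → |g t| ≤ M) :
    |∫ t in u..v, K t * g t| ≤ M * ∫ t in u..v, |K t| := by
  rw [← intervalIntegral.integral_const_mul]
  refine intervalIntegral.norm_integral_le_of_norm_le (f := fun t => K t * g t) huv ?_
    (hK.abs.const_mul M)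
  filter_upwards [hg] with t hgt ht
  rw [Real.norm_eq_abs, abs_mul, mul_comm M]
  exact mul_le_mul_of_nonneg_left (hgt (Ioc_subset_Icc_self ht)) (abs_nonneg _)

noncomputable def peanoRemainder (a b : ℝ) (g : ℝ → ℝ) : ℝ :=
  (∫ t in a..(3 * a + b) / 4, quadKernel ((3 * a + b) / 4) ((b - a) ^ 2 / 32) t * g t)
  + (∫ t in (3 * a + b) / 4..(a + 3 * b) / 4, quadKernel ((a + b) / 2) 0 t * g t)
  + ∫ t in (a + 3 * b) / 4..b, quadKernel ((a + 3 * b) / 4) ((b - a) ^ 2 / 32) t * g t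

lemma quadrature_error_eq_peanoRemainder {a b : ℝ} {f f' : ℝ → ℝ} (hab : a ≤ b)
    (hf : ∀ t ∈ Icc a b, HasDerivAt f (f' t) t) (hf' : IntervalIntegrable f' volume a b) :
    (b - a) * ((1 / 2) * (((∫ t in a..(3 * a + b) / 4, f t) + ∫ t in a..(a + 3 * b) / 4, f t) / 2
        + (∫ t in a..b, f t) / 2)
      + ((b - a) / 8) * ((f ((3 * a + b) / 4) - f ((a + 3 * b) / 4)) / 2))
      - (b * (∫ t in a..b, f t) - ∫ t in a..b, t * f t) = -peanoRemainder a b f' := by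
  set c₁ := (3 * a + b) / 4 with hc₁
  set c₂ := (a + 3 * b) / 4 with hc₂
  have hc₁_mem : c₁ ∈ uIcc a b := by rw [uIcc_of_le hab]; constructor <;> linarith
  have hc₂_mem : c₂ ∈ uIcc a b := by rw [uIcc_of_le hab]; constructor <;> linarith
  have hf_uIcc : ∀ t ∈ uIcc a b, HasDerivAt f (f' t) t := by rwa [uIcc_of_le hab]
  have hfi : IntervalIntegrable f volume a b :=
    (HasDerivAt.continuousOn hf_uIcc).intervalIntegrable
  have hmfi : IntervalIntegrable (fun t => t * f t) volume a b :=
    hfi.continuousOn_mul continuousOn_id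
  have hpiece : ∀ {u v} (c k : ℝ), u ∈ uIcc a b → v ∈ uIcc a b →
      ∫ t in u..v, quadKernel c k t * f' t = quadKernel c k v * f v - quadKernel c k u * f u
        - ((∫ t in u..v, t * f t) - c * ∫ t in u..v, f t) := fun c k hu hv =>
    integral_quadKernel_mul_deriv c k (fun t ht => hf_uIcc t (uIcc_subset_uIcc hu hv ht))
      (hf'.mono_set (uIcc_subset_uIcc hu hv))
  have hsplit : ∀ {φ : ℝ → ℝ}, IntervalIntegrable φ volume a b →
      ∫ t in a..b, φ t = (∫ t in a..c₁, φ t) + (∫ t in c₁..c₂, φ t) + ∫ t in c₂..b, φ t := by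
    intro φ hφ
    rw [intervalIntegral.integral_add_adjacent_intervals
        (hφ.mono_set (uIcc_subset_uIcc left_mem_uIcc hc₁_mem))
        (hφ.mono_set (uIcc_subset_uIcc hc₁_mem hc₂_mem)),
      intervalIntegral.integral_add_adjacent_intervals
        (hφ.mono_set (uIcc_subset_uIcc left_mem_uIcc hc₂_mem))
        (hφ.mono_set (uIcc_subset_uIcc hc₂_mem right_mem_uIcc))]
  have hsplit₂ : ∫ t in a..c₂, f t = (∫ t in a..c₁, f t) + ∫ t in c₁..c₂, f t :=
    (intervalIntegral.integral_add_adjacent_intervals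
      (hfi.mono_set (uIcc_subset_uIcc left_mem_uIcc hc₁_mem))
      (hfi.mono_set (uIcc_subset_uIcc hc₁_mem hc₂_mem))).symm
  rw [peanoRemainder, hpiece _ _ left_mem_uIcc hc₁_mem, hpiece _ _ hc₁_mem hc₂_mem,
    hpiece _ _ hc₂_mem right_mem_uIcc, hsplit hfi, hsplit hmfi, hsplit₂]
  simp only [quadKernel, hc₁, hc₂]
  ring

lemma abs_peanoRemainder_le {a b M : ℝ} {g : ℝ → ℝ} (hab : a ≤ b)
    (hg : ∀ᵐ t, t ∈ Icc a b → |g t| ≤ M) :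
    |peanoRemainder a b g| ≤ M * (b - a) ^ 3 / 64 := by
  rw [peanoRemainder]
  set c₁ := (3 * a + b) / 4 with hc₁
  set c₂ := (a + 3 * b) / 4 with hc₂
  have hpiece : ∀ (u v c k : ℝ), a ≤ u → u ≤ v → v ≤ b →
      |∫ t in u..v, quadKernel c k t * g t| ≤ M * ∫ t in u..v, |quadKernel c k t| :=
    fun u v c k hau huv hvb =>
      abs_integral_mul_le huv ((continuous_quadKernel c k).intervalIntegrable u v)
        (hg.mono fun t h ht => h (Icc_subset_Icc hau hvb ht))
  have h₁ : ∫ t in a..c₁, |quadKernel c₁ ((b - a) ^ 2 / 32) t| = (b - a) ^ 3 / 192 := by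
    rw [integral_abs_quadKernel_of_nonpos]
    · ring
    · intro t ht
      rw [uIcc_of_le (by linarith)] at ht
      simp only [quadKernel]
      nlinarith [ht.1, ht.2]
  have h₂ : ∫ t in c₁..c₂, |quadKernel ((a + b) / 2) 0 t| = (b - a) ^ 3 / 192 := by
    rw [integral_abs_quadKernel_of_nonneg fun t _ => by
      simp only [quadKernel, sub_zero]; positivity]
    ring
  have h₃ : ∫ t in c₂..b, |quadKernel c₂ ((b - a) ^ 2 / 32) t| = (b - a) ^ 3 / 192 := by
    rw [integral_abs_quadKernel_of_nonpos]
    · ring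
    · intro t ht
      rw [uIcc_of_le (by linarith)] at ht
      simp only [quadKernel]
      nlinarith [ht.1, ht.2]
  calc _ ≤ M * (b - a) ^ 3 / 192 + M * (b - a) ^ 3 / 192 + M * (b - a) ^ 3 / 192 := by
        refine (abs_add_three _ _ _).trans (add_le_add_three ?_ ?_ ?_)
        · exact (hpiece a c₁ _ _ le_rfl (by linarith) (by linarith)).trans_eq (by rw [h₁]; ring)
        · exact (hpiece c₁ c₂ _ _ (by linarith) (by linarith) (by linarith)).trans_eq
            (by rw [h₂]; ring)
        · exact (hpiece c₂ b _ _ (by linarith) (by linarith) le_rfl).trans_eq (by rw [h₃]; ring)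
    _ = M * (b - a) ^ 3 / 64 := by ring

theorem pdf_best_estimator_general
    (a b : ℝ) (hab : a < b) (f f' : ℝ → ℝ) (M : ℝ)
    (hf' : ∀ t ∈ Icc a b, HasDerivAt f (f' t) t)
    (hint : IntervalIntegrable f' volume a b)
    (hM : ∀ᵐ t ∂volume, t ∈ Icc a b → |f' t| ≤ M)
    (hdens : (∫ t in a..b, f t) = 1)
    (F : ℝ → ℝ) (hF : ∀ y, F y = ∫ t in a..y, f t)
    (E : ℝ) (hE : E = ∫ t in a..b, t * f t) :
    |(1/2) * ((F ((3*a + b)/4) + F ((a + 3*b)/4)) / 2 + 1/2)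
      + ((b - a)/8) * ((f ((3*a + b)/4) - f ((a + 3*b)/4)) / 2)
      - (b - E) / (b - a)|
    ≤ (1/64) * (b - a)^2 * M := by
  have hL : 0 < b - a := sub_pos.mpr hab
  have key := quadrature_error_eq_peanoRemainder hab.le hf' hint
  rw [hdens, ← hF, ← hF, ← hE] at key
  have herr : (1/2) * ((F ((3*a + b)/4) + F ((a + 3*b)/4)) / 2 + 1/2)
      + ((b - a)/8) * ((f ((3*a + b)/4) - f ((a + 3*b)/4)) / 2) - (b - E) / (b - a)
      = -peanoRemainder a b f' / (b - a) := by
    rw [← key]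
    field_simp
  rw [herr, abs_div, abs_neg, abs_of_pos hL, div_le_iff₀ hL]
  calc |peanoRemainder a b f'| ≤ M * (b - a) ^ 3 / 64 := abs_peanoRemainder_le hab.le hM
    _ = 1 / 64 * (b - a) ^ 2 * M * (b - a) := by ring

theorem pdf_best_estimator
    (a b : ℝ) (hab : a < b) (f f' : ℝ → ℝ) (M : ℝ)
    (hrange : ∀ t ∈ Icc a b, f t ∈ Icc (0:ℝ) 1)
    (hf' : ∀ t ∈ Icc a b, HasDerivAt f (f' t) t)
    (hint : IntervalIntegrable f' volume a b)
    (hM : ∀ᵐ t ∂volume, t ∈ Icc a b → |f' t| ≤ M)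
    (hdens : (∫ t in a..b, f t) = 1)
    (F : ℝ → ℝ) (hF : ∀ y, F y = ∫ t in a..y, f t)
    (E : ℝ) (hE : E = ∫ t in a..b, t * f t) :
    |(1/2) * ((F ((3*a + b)/4) + F ((a + 3*b)/4)) / 2 + 1/2)
      + ((b - a)/8) * ((f ((3*a + b)/4) - f ((a + 3*b)/4)) / 2)
      - (b - E) / (b - a)|
    ≤ (1/64) * (b - a)^2 * M :=
  pdf_best_estimator_general a b hab f f' M hf' hint hM hdens F hF E hE
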